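/- Let t ≥ 1 and suppose that for every k with 0 ≤ k ≤ t the ADMM optimality conditions hold: (i) for all z ∈ Z, θ1(z) − θ1(z^{k+1}) + ⟨z − z^{k+1}, λ^k − β(Dx^k − z^{k+1})⟩ ≥ 0; (ii) for all x ∈ X, θ2(x) − θ2(x^{k+1}) + ⟨x − x^{k+1}, −Dᵀλ^k + βDᵀ(Dx^{k+1} − z^{k+1})⟩ ≥ 0; (iii) λ^{k+1} = λ^k − β(Dx^{k+1} − z^{k+1}). Let ω̃ = (z̃, x̃, λ̃) with z̃ = (1/(t+1))∑_{k=0}^{t} z^{k+1}, x̃ = (1/(t+1))∑_{k=0}^{t} x^{k+1}, λ̃ = (1/(t+1))∑_{k=0}^{t} λ^{k+1}, let D_ω̃ = {ω ∈ Z × X × R^n : ‖ω − ω̃‖ ≤ 1}, and let d = sup{(1/β)‖λ^0 − λ‖₂² + β‖Dx^0 − z‖₂² : ω = (z, x, λ) ∈ D_ω̃}. Then sup over ω = (z, x, λ) ∈ D_ω̃ of θ1(z̃) + θ2(x̃) − θ1(z) − θ2(x) + ⟨ω̃ − ω, F(ω)⟩ is at most d/(2t). -/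

import Mathlib

open scoped RealInnerProductSpace

/-- Matrix-vector multiplication, landing in Euclidean space. -/
noncomputable def mulv {n d : ℕ} (A : Matrix (Fin n) (Fin d) ℝ)
    (x : EuclideanSpace ℝ (Fin d)) : EuclideanSpace ℝ (Fin n) := WithLp.toLp 2 (A.mulVec x)

/-- `θ₁(z) = ‖z‖₁`, the sum of absolute values of the entries of `z`. -/
noncomputable def theta1 {n : ℕ} (z : EuclideanSpace ℝ (Fin n)) : ℝ := ∑ i, |z i|

/-- `θ₂(x) = (α/2)‖y − Mx‖₂²`. -/
noncomputable def theta2 {m d : ℕ} (M : Matrix (Fin m) (Fin d) ℝ)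
    (y : EuclideanSpace ℝ (Fin m)) (α : ℝ) (x : EuclideanSpace ℝ (Fin d)) : ℝ :=
  α / 2 * ‖y - mulv M x‖ ^ 2

lemma mulv_sub {n d : ℕ} (A : Matrix (Fin n) (Fin d) ℝ) (x y : EuclideanSpace ℝ (Fin d)) :
    mulv A (x - y) = mulv A x - mulv A y := by
  ext i
  simp [mulv, Matrix.mulVec_sub]

lemma mulv_smul {n d : ℕ} (A : Matrix (Fin n) (Fin d) ℝ) (c : ℝ) (x : EuclideanSpace ℝ (Fin d)) :
    mulv A (c • x) = c • mulv A x := by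
  ext i
  simp [mulv, Matrix.mulVec_smul]

lemma mulv_add {n d : ℕ} (A : Matrix (Fin n) (Fin d) ℝ) (x y : EuclideanSpace ℝ (Fin d)) :
    mulv A (x + y) = mulv A x + mulv A y := by
  ext i
  simp [mulv, Matrix.mulVec_add]

lemma mulv_sum {n d : ℕ} (A : Matrix (Fin n) (Fin d) ℝ) (s : Finset ℕ)
    (f : ℕ → EuclideanSpace ℝ (Fin d)) :
    mulv A (∑ k ∈ s, f k) = ∑ k ∈ s, mulv A (f k) :=
  map_sum (AddMonoidHom.mk' (mulv A) (mulv_add A)) f s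

lemma inner_mulv {n d : ℕ} (A : Matrix (Fin n) (Fin d) ℝ) (x : EuclideanSpace ℝ (Fin d))
    (l : EuclideanSpace ℝ (Fin n)) : ⟪x, mulv A.transpose l⟫ = ⟪mulv A x, l⟫ := by
  simp only [mulv, PiLp.inner_apply, RCLike.inner_apply, conj_trivial, Matrix.mulVec,
    dotProduct, Matrix.transpose_apply, Finset.mul_sum, Finset.sum_mul]
  rw [Finset.sum_comm]
  congr 1; ext i; congr 1; ext j; ring

lemma theta1_convex {n : ℕ} : ConvexOn ℝ Set.univ (theta1 (n := n)) := by
  refine ⟨convex_univ, ?_⟩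
  intro p _ q _ a b ha hb hab
  simp only [theta1, smul_eq_mul]
  rw [Finset.mul_sum, Finset.mul_sum, ← Finset.sum_add_distrib]
  apply Finset.sum_le_sum
  intro i _
  have : (a • p + b • q : EuclideanSpace ℝ (Fin n)) i = a * p i + b * q i := by
    simp [PiLp.add_apply, PiLp.smul_apply]
  rw [this]
  calc |a * p i + b * q i| ≤ |a * p i| + |b * q i| := abs_add_le _ _
  _ = a * |p i| + b * |q i| := by rw [abs_mul, abs_mul, abs_of_nonneg ha, abs_of_nonneg hb]

lemma theta2_convex {m d : ℕ} (M : Matrix (Fin m) (Fin d) ℝ) (y : EuclideanSpace ℝ (Fin m))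
    (α : ℝ) (hα : 0 < α) : ConvexOn ℝ Set.univ (theta2 M y α) := by
  refine ⟨convex_univ, ?_⟩
  intro p _ q _ a b ha hb hab
  simp only [theta2, smul_eq_mul]
  have hmul : mulv M (a • p + b • q) = a • mulv M p + b • mulv M q := by
    rw [mulv_add, mulv_smul, mulv_smul]
  have hy : a • (y - mulv M p) + b • (y - mulv M q)
      = (a + b) • y - (a • mulv M p + b • mulv M q) := by module
  rw [hab, one_smul] at hy
  rw [hmul, ← hy]
  have h1 : ‖a • (y - mulv M p) + b • (y - mulv M q)‖ ≤ a * ‖y - mulv M p‖ + b * ‖y - mulv M q‖ := by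
    calc ‖a • (y - mulv M p) + b • (y - mulv M q)‖ ≤ ‖a • (y - mulv M p)‖ + ‖b • (y - mulv M q)‖ :=
      norm_add_le _ _
    _ = a * ‖y - mulv M p‖ + b * ‖y - mulv M q‖ := by
      rw [norm_smul, norm_smul, Real.norm_eq_abs, Real.norm_eq_abs, abs_of_nonneg ha,
        abs_of_nonneg hb]
  have h2 : ‖a • (y - mulv M p) + b • (y - mulv M q)‖^2 ≤ (a * ‖y - mulv M p‖ + b * ‖y - mulv M q‖)^2 := by
    apply sq_le_sq' _ h1
    nlinarith [norm_nonneg (a • (y - mulv M p) + b • (y - mulv M q))]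
  have h3 : (a * ‖y - mulv M p‖ + b * ‖y - mulv M q‖)^2 ≤ a * ‖y - mulv M p‖^2 + b * ‖y - mulv M q‖^2 := by
    nlinarith [sq_nonneg (‖y - mulv M p‖ - ‖y - mulv M q‖), mul_nonneg ha hb]
  have h4 := mul_le_mul_of_nonneg_left (le_trans h2 h3) (by positivity : (0:ℝ) ≤ α/2)
  linarith [h4]

lemma key_eq {E : Type*} [NormedAddCommGroup E] [InnerProductSpace ℝ E]
    (β : ℝ) (hβ : 0 < β) (z Zk u v w l Lk Lk1 : E)
    (hL : Lk1 = Lk - β • (v - Zk)) :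
    ⟪z - Zk, Lk - β • (u - Zk)⟫ + ⟪w - v, -Lk1⟫ +
      (⟪Zk - z, l⟫ + ⟪w - v, l⟫ + ⟪Lk1 - l, w - z⟫) =
    ((β⁻¹ * ‖Lk - l‖^2 + β * ‖u - z‖^2) - (β⁻¹ * ‖Lk1 - l‖^2 + β * ‖v - z‖^2)) / 2
      - (β/2) * ‖u - Zk‖^2 := by
  subst hL
  have hb : β ≠ 0 := ne_of_gt hβ
  simp only [← real_inner_self_eq_norm_sq]
  simp only [inner_sub_left, inner_sub_right, inner_smul_left, inner_smul_right,
    inner_neg_left, inner_neg_right, RCLike.conj_to_real, conj_trivial]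
  simp only [real_inner_comm Zk z, real_inner_comm u z, real_inner_comm u Zk,
    real_inner_comm v z, real_inner_comm v Zk, real_inner_comm v u,
    real_inner_comm w z, real_inner_comm w Zk, real_inner_comm w u, real_inner_comm w v,
    real_inner_comm l z, real_inner_comm l Zk, real_inner_comm l u, real_inner_comm l v,
    real_inner_comm l w, real_inner_comm Lk z, real_inner_comm Lk Zk, real_inner_comm Lk u,
    real_inner_comm Lk v, real_inner_comm Lk w, real_inner_comm Lk l]
  field_simp
  ring

lemma key_le {E : Type*} [NormedAddCommGroup E] [InnerProductSpace ℝ E]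
    (β : ℝ) (hβ : 0 < β) (c1 c2 : ℝ) (z Zk u v w l Lk Lk1 : E)
    (hL : Lk1 = Lk - β • (v - Zk))
    (hA : c1 + ⟪z -Zk, Lk - β • (u - Zk)⟫ ≥ 0)
    (hB : c2 + ⟪w - v, -Lk1⟫ ≥ 0) :
    -c1 - c2 + (⟪Zk - z, l⟫ + ⟪w - v, l⟫ + ⟪Lk1 - l, w - z⟫) ≤
      ((β⁻¹ * ‖Lk - l‖^2 + β * ‖u - z‖^2) - (β⁻¹ * ‖Lk1 - l‖^2 + β * ‖v - z‖^2)) / 2 := by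
  have he := key_eq β hβ z Zk u v w l Lk Lk1 hL
  have h0 : 0 ≤ (β/2) * ‖u - Zk‖^2 := by positivity
  linarith

set_option maxHeartbeats 3000000 in
/-- The ergodic ADMM average `ω̃` is an `O(1/t)` approximate solution: over the unit ball
`D_ω̃ = {ω ∈ Z × X × ℝⁿ : ‖ω − ω̃‖ ≤ 1}` the variational-inequality residual is at most
`d/(2t)`, where `d = sup{(1/β)‖λ⁰ − λ‖² + β‖Dx⁰ − z‖² : ω ∈ D_ω̃}`. -/
theorem stmt_13 {n d m : ℕ} (D : Matrix (Fin n) (Fin d) ℝ) (M : Matrix (Fin m) (Fin d) ℝ)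
    (y : EuclideanSpace ℝ (Fin m)) (α β : ℝ) (hα : 0 < α) (hβ : 0 < β)
    (Z : Set (EuclideanSpace ℝ (Fin n))) (X : Set (EuclideanSpace ℝ (Fin d)))
    (hZ : Convex ℝ Z) (hX : Convex ℝ X)
    (zseq : ℕ → EuclideanSpace ℝ (Fin n)) (xseq : ℕ → EuclideanSpace ℝ (Fin d))
    (lseq : ℕ → EuclideanSpace ℝ (Fin n)) (t : ℕ)
    (hzZ : ∀ k ≤ t + 1, zseq k ∈ Z) (hxX : ∀ k ≤ t + 1, xseq k ∈ X)
    (h1 : ∀ k ≤ t, ∀ z ∈ Z, theta1 z - theta1 (zseq (k + 1)) +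
      ⟪z - zseq (k + 1), lseq k - β • (mulv D (xseq k) - zseq (k + 1))⟫ ≥ 0)
    (h2 : ∀ k ≤ t, ∀ x ∈ X, theta2 M y α x - theta2 M y α (xseq (k + 1)) +
      ⟪x - xseq (k + 1), -(mulv D.transpose (lseq k)) +
        β • mulv D.transpose (mulv D (xseq (k + 1)) - zseq (k + 1))⟫ ≥ 0)
    (h3 : ∀ k ≤ t, lseq (k + 1) = lseq k - β • (mulv D (xseq (k + 1)) - zseq (k + 1)))
    (ht : 1 ≤ t)
    (zt : EuclideanSpace ℝ (Fin n)) (xt : EuclideanSpace ℝ (Fin d))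
    (lt : EuclideanSpace ℝ (Fin n))
    (hzt : zt = (((t : ℝ) + 1)⁻¹) • ∑ k ∈ Finset.range (t + 1), zseq (k + 1))
    (hxt : xt = (((t : ℝ) + 1)⁻¹) • ∑ k ∈ Finset.range (t + 1), xseq (k + 1))
    (hlt : lt = (((t : ℝ) + 1)⁻¹) • ∑ k ∈ Finset.range (t + 1), lseq (k + 1))
    (dd : ℝ)
    (hdd : dd = sSup {r : ℝ | ∃ z ∈ Z, ∃ x ∈ X, ∃ l : EuclideanSpace ℝ (Fin n),
      Real.sqrt (‖z - zt‖ ^ 2 + ‖x - xt‖ ^ 2 + ‖l - lt‖ ^ 2) ≤ 1 ∧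
      r = (1 / β) * ‖lseq 0 - l‖ ^ 2 + β * ‖mulv D (xseq 0) - z‖ ^ 2}) :
    ∀ z ∈ Z, ∀ x ∈ X, ∀ l : EuclideanSpace ℝ (Fin n),
      Real.sqrt (‖z - zt‖ ^ 2 + ‖x - xt‖ ^ 2 + ‖l - lt‖ ^ 2) ≤ 1 →
      theta1 zt + theta2 M y α xt - theta1 z - theta2 M y α x +
        (⟪zt - z, l⟫ + ⟪xt - x, -(mulv D.transpose l)⟫ + ⟪lt - l, mulv D x - z⟫) ≤
      dd / (2 * (t : ℝ)) := by
  intro z hz x hx l hl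
  have hT0 : (0:ℝ) < (t : ℝ) + 1 := by positivity
  have hT' : ((t : ℝ) + 1) ≠ 0 := ne_of_gt hT0
  set S := Finset.range (t + 1) with hS
  set a : ℕ → ℝ := fun k => β⁻¹ * ‖lseq k - l‖^2 + β * ‖mulv D (xseq k) - z‖^2 with ha
  -- bound a 0 by dd
  have hbdd : BddAbove {r : ℝ | ∃ z ∈ Z, ∃ x ∈ X, ∃ l : EuclideanSpace ℝ (Fin n),
      Real.sqrt (‖z - zt‖ ^ 2 + ‖x - xt‖ ^ 2 + ‖l - lt‖ ^ 2) ≤ 1 ∧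
      r = (1 / β) * ‖lseq 0 - l‖ ^ 2 + β * ‖mulv D (xseq 0) - z‖ ^ 2} := by
    refine ⟨(1/β) * (‖lseq 0 - lt‖ + 1)^2 + β * (‖mulv D (xseq 0) - zt‖ + 1)^2, ?_⟩
    rintro r ⟨z', _, x', _, l', hsq, rfl⟩
    have hnn : (0:ℝ) ≤ ‖z' - zt‖ ^ 2 + ‖x' - xt‖ ^ 2 + ‖l' - lt‖ ^ 2 := by positivity
    have hs1 : ‖z' - zt‖ ^ 2 + ‖x' - xt‖ ^ 2 + ‖l' - lt‖ ^ 2 ≤ 1 := by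
      nlinarith [Real.sq_sqrt hnn, Real.sqrt_nonneg (‖z' - zt‖ ^ 2 + ‖x' - xt‖ ^ 2 + ‖l' - lt‖ ^ 2), hsq]
    have hz1 : ‖z' - zt‖ ≤ 1 := by
      nlinarith [norm_nonneg (z' - zt), sq_nonneg ‖x' - xt‖, sq_nonneg ‖l' - lt‖]
    have hl1 : ‖l' - lt‖ ≤ 1 := by
      nlinarith [norm_nonneg (l' - lt), sq_nonneg ‖x' - xt‖, sq_nonneg ‖z' - zt‖]
    have htr1 : ‖lseq 0 - l'‖ ≤ ‖lseq 0 - lt‖ + 1 := by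
      have h := dist_triangle (lseq 0) lt l'
      simp only [dist_eq_norm] at h
      have : ‖lt - l'‖ = ‖l' - lt‖ := norm_sub_rev _ _
      linarith
    have htr2 : ‖mulv D (xseq 0) - z'‖ ≤ ‖mulv D (xseq 0) - zt‖ + 1 := by
      have h := dist_triangle (mulv D (xseq 0)) zt z'
      simp only [dist_eq_norm] at h
      have : ‖zt - z'‖ = ‖z' - zt‖ := norm_sub_rev _ _
      linarith
    have hb1 : (0:ℝ) ≤ 1/β := by positivity
    gcongr <;> positivity
  have ha0mem : a 0 ∈ {r : ℝ | ∃ z ∈ Z, ∃ x ∈ X, ∃ l : EuclideanSpace ℝ (Fin n),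
      Real.sqrt (‖z - zt‖ ^ 2 + ‖x - xt‖ ^ 2 + ‖l - lt‖ ^ 2) ≤ 1 ∧
      r = (1 / β) * ‖lseq 0 - l‖ ^ 2 + β * ‖mulv D (xseq 0) - z‖ ^ 2} := by
    refine ⟨z, hz, x, hx, l, hl, ?_⟩
    simp only [ha, one_div]
  have ha0dd : a 0 ≤ dd := by
    rw [hdd]
    exact le_csSup hbdd ha0mem
  have ha00 : 0 ≤ a 0 := by
    have h1' : (0:ℝ) ≤ β⁻¹ := le_of_lt (inv_pos.mpr hβ)
    simp only [ha]
    positivity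
  have hdd0 : 0 ≤ dd := le_trans ha00 ha0dd
  -- per-iteration inequality
  have hkey : ∀ k ∈ S, (theta1 (zseq (k+1)) - theta1 z) + (theta2 M y α (xseq (k+1)) - theta2 M y α x)
      + (⟪zseq (k+1) - z, l⟫ + ⟪mulv D x - mulv D (xseq (k+1)), l⟫
        + ⟪lseq (k+1) - l, mulv D x - z⟫)
      ≤ (a k - a (k+1))/2 := by
    intro k hk
    rw [hS, Finset.mem_range_succ_iff] at hk
    have hA := h1 k hk z hz
    have hB := h2 k hk x hx
    have h3k := h3 k hk
    have hBi : ⟪x - xseq (k+1), -(mulv D.transpose (lseq k)) +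
        β • mulv D.transpose (mulv D (xseq (k + 1)) - zseq (k + 1))⟫
        = ⟪mulv D x - mulv D (xseq (k+1)), -(lseq (k+1))⟫ := by
      rw [h3k]
      simp only [inner_add_right, inner_neg_right, inner_smul_right, inner_mulv, mulv_sub,
        inner_sub_right]
      ring
    rw [hBi] at hB
    have := key_le β hβ (theta1 z - theta1 (zseq (k+1)))
      (theta2 M y α x - theta2 M y α (xseq (k+1)))
      z (zseq (k+1)) (mulv D (xseq k)) (mulv D (xseq (k+1))) (mulv D x) l
      (lseq k) (lseq (k+1)) h3k hA hB
    simp only [ha]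
    linarith
  have hsum := Finset.sum_le_sum hkey
  have htel : ∑ k ∈ S, (a k - a (k+1))/2 = (a 0 - a (t+1))/2 := by
    rw [← Finset.sum_div, hS, Finset.sum_range_sub' a (t+1)]
  have hat1 : 0 ≤ a (t + 1) := by
    have h1' : (0:ℝ) ≤ β⁻¹ := le_of_lt (inv_pos.mpr hβ)
    have := sq_nonneg ‖lseq (t+1) - l‖
    have := sq_nonneg ‖mulv D (xseq (t+1)) - z‖
    simp only [ha]
    positivity
  -- sum identities
  have hsz : ∑ k ∈ S, ⟪zseq (k+1) - z, l⟫ = ((t:ℝ)+1) * ⟪zt - z, l⟫ := by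
    have e1 : ∑ k ∈ S, (zseq (k+1) - z) = (∑ k ∈ S, zseq (k+1)) - ((t:ℝ)+1) • z := by
      rw [Finset.sum_sub_distrib, Finset.sum_const, hS, Finset.card_range]
      congr 1
      rw [← Nat.cast_smul_eq_nsmul ℝ]
      norm_num
    have e2 : ((t:ℝ)+1) • (zt - z) = (∑ k ∈ S, zseq (k+1)) - ((t:ℝ)+1) • z := by
      rw [hzt, smul_sub, smul_smul, mul_inv_cancel₀ hT', one_smul]
    rw [← sum_inner, e1, ← e2, real_inner_smul_left]
  have hsl : ∑ k ∈ S, ⟪lseq (k+1) - l, mulv D x - z⟫ = ((t:ℝ)+1) * ⟪lt - l, mulv D x - z⟫ := by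
    have e1 : ∑ k ∈ S, (lseq (k+1) - l) = (∑ k ∈ S, lseq (k+1)) - ((t:ℝ)+1) • l := by
      rw [Finset.sum_sub_distrib, Finset.sum_const, hS, Finset.card_range]
      congr 1
      rw [← Nat.cast_smul_eq_nsmul ℝ]
      norm_num
    have e2 : ((t:ℝ)+1) • (lt - l) = (∑ k ∈ S, lseq (k+1)) - ((t:ℝ)+1) • l := by
      rw [hlt, smul_sub, smul_smul, mul_inv_cancel₀ hT', one_smul]
    rw [← sum_inner, e1, ← e2, real_inner_smul_left]
  have hsx : ∑ k ∈ S, ⟪mulv D x - mulv D (xseq (k+1)), l⟫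
      = ((t:ℝ)+1) * ⟪xt - x, -(mulv D.transpose l)⟫ := by
    have e0 : ⟪xt - x, -(mulv D.transpose l)⟫ = ⟪mulv D x - mulv D xt, l⟫ := by
      rw [inner_neg_right, inner_mulv, mulv_sub]
      simp only [inner_sub_left]
      ring
    have e1 : ∑ k ∈ S, (mulv D x - mulv D (xseq (k+1)))
        = ((t:ℝ)+1) • mulv D x - (∑ k ∈ S, mulv D (xseq (k+1))) := by
      rw [Finset.sum_sub_distrib, Finset.sum_const, hS, Finset.card_range]
      congr 1
      rw [← Nat.cast_smul_eq_nsmul ℝ]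
      norm_num
    have e2 : ((t:ℝ)+1) • (mulv D x - mulv D xt)
        = ((t:ℝ)+1) • mulv D x - (∑ k ∈ S, mulv D (xseq (k+1))) := by
      rw [hxt, mulv_smul, smul_sub, smul_smul, mul_inv_cancel₀ hT', one_smul, mulv_sum]
    rw [e0, ← sum_inner, e1, ← e2, real_inner_smul_left]
  -- Jensen
  have hwsum : ∑ _k ∈ S, ((t:ℝ)+1)⁻¹ = 1 := by
    rw [Finset.sum_const, hS, Finset.card_range, nsmul_eq_mul]
    push_cast
    rw [mul_inv_cancel₀ hT']
  have hJ1 : ((t:ℝ)+1) * theta1 zt ≤ ∑ k ∈ S, theta1 (zseq (k+1)) := by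
    have hj := theta1_convex.map_sum_le (t := S) (w := fun _ => ((t:ℝ)+1)⁻¹)
      (p := fun k => zseq (k+1)) (fun _ _ => by positivity) hwsum (fun _ _ => Set.mem_univ _)
    rw [← Finset.smul_sum, ← hzt] at hj
    simp only [smul_eq_mul] at hj
    have : ∑ k ∈ S, ((t:ℝ)+1)⁻¹ * theta1 (zseq (k+1))
        = ((t:ℝ)+1)⁻¹ * ∑ k ∈ S, theta1 (zseq (k+1)) := by rw [Finset.mul_sum]
    rw [this] at hj
    have := mul_le_mul_of_nonneg_left hj (le_of_lt hT0)
    rw [← mul_assoc, mul_inv_cancel₀ hT', one_mul] at this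
    exact this
  have hJ2 : ((t:ℝ)+1) * theta2 M y α xt ≤ ∑ k ∈ S, theta2 M y α (xseq (k+1)) := by
    have hj := (theta2_convex M y α hα).map_sum_le (t := S) (w := fun _ => ((t:ℝ)+1)⁻¹)
      (p := fun k => xseq (k+1)) (fun _ _ => by positivity) hwsum (fun _ _ => Set.mem_univ _)
    rw [← Finset.smul_sum, ← hxt] at hj
    simp only [smul_eq_mul] at hj
    have : ∑ k ∈ S, ((t:ℝ)+1)⁻¹ * theta2 M y α (xseq (k+1))
        = ((t:ℝ)+1)⁻¹ * ∑ k ∈ S, theta2 M y α (xseq (k+1)) := by rw [Finset.mul_sum]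
    rw [this] at hj
    have := mul_le_mul_of_nonneg_left hj (le_of_lt hT0)
    rw [← mul_assoc, mul_inv_cancel₀ hT', one_mul] at this
    exact this
  -- expand the summed LHS
  have hexpand : ∑ k ∈ S, ((theta1 (zseq (k+1)) - theta1 z)
      + (theta2 M y α (xseq (k+1)) - theta2 M y α x)
      + (⟪zseq (k+1) - z, l⟫ + ⟪mulv D x - mulv D (xseq (k+1)), l⟫
        + ⟪lseq (k+1) - l, mulv D x - z⟫))
      = (∑ k ∈ S, theta1 (zseq (k+1))) + (∑ k ∈ S, theta2 M y α (xseq (k+1)))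
        - ((t:ℝ)+1) * theta1 z - ((t:ℝ)+1) * theta2 M y α x
        + ((∑ k ∈ S, ⟪zseq (k+1) - z, l⟫) + (∑ k ∈ S, ⟪mulv D x - mulv D (xseq (k+1)), l⟫)
          + (∑ k ∈ S, ⟪lseq (k+1) - l, mulv D x - z⟫)) := by
    simp only [Finset.sum_add_distrib, Finset.sum_sub_distrib, Finset.sum_const, hS,
      Finset.card_range, nsmul_eq_mul]
    push_cast
    ring
  -- main combined bound
  have hmain : ((t:ℝ)+1) * (theta1 zt + theta2 M y α xt - theta1 z - theta2 M y α x +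
      (⟪zt - z, l⟫ + ⟪xt - x, -(mulv D.transpose l)⟫ + ⟪lt - l, mulv D x - z⟫))
      ≤ a 0 / 2 := by
    have h5 : ∑ k ∈ S, ((theta1 (zseq (k+1)) - theta1 z)
        + (theta2 M y α (xseq (k+1)) - theta2 M y α x)
        + (⟪zseq (k+1) - z, l⟫ + ⟪mulv D x - mulv D (xseq (k+1)), l⟫
          + ⟪lseq (k+1) - l, mulv D x - z⟫)) ≤ (a 0 - a (t+1))/2 := by
      rw [← htel]; exact hsum
    rw [hexpand, hsz, hsx, hsl] at h5
    set G1 := theta1 zt with hG1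
    set G2 := theta2 M y α xt with hG2
    set W1 := theta1 z with hW1
    set W2 := theta2 M y α x with hW2
    set I1 : ℝ := ⟪zt - z, l⟫ with hI1
    set I2 : ℝ := ⟪xt - x, -(mulv D.transpose l)⟫ with hI2
    set I3 : ℝ := ⟪lt - l, mulv D x - z⟫ with hI3
    set S1 := ∑ k ∈ S, theta1 (zseq (k+1)) with hS1
    set S2 := ∑ k ∈ S, theta2 M y α (xseq (k+1)) with hS2
    set A0 := a 0 with hA0
    set A1 := a (t+1) with hA1
    clear_value G1 G2 W1 W2 I1 I2 I3 S1 S2 A0 A1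
    linarith [hJ1, hJ2, h5, hat1]
  -- conclude
  have ht1 : (1:ℝ) ≤ (t:ℝ) := by exact_mod_cast ht
  set G : ℝ := theta1 zt + theta2 M y α xt - theta1 z - theta2 M y α x +
      (⟪zt - z, l⟫ + ⟪xt - x, -(mulv D.transpose l)⟫ + ⟪lt - l, mulv D x - z⟫) with hGdef
  set A0 := a 0 with hA0f
  clear_value G A0
  have hfin : G ≤ dd / (2 * ((t:ℝ)+1)) := by
    rw [le_div_iff₀ (by positivity)]
    linarith [hmain, ha0dd]
  have hstep : dd / (2 * ((t:ℝ)+1)) ≤ dd / (2 * (t:ℝ)) := by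
    gcongr <;> linarith
  linarith [hfin, hstep]
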